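/- Let G be a connected graph on [n] that has the interval property with respect to its labeling, let H = in_lex(G), and let M = {x_{i_1}, y_{j_1}}, …, {x_{i_m}, y_{j_m}} be an induced matching of H with i_1 < ⋯ < i_m satisfying condition (∗) and with m = indmatch(H). Then for every 1 ≤ s ≤ m−1, the pair {i_s, i_{s+1}} is an edge of G. -/

import Mathlib

open SimpleGraph

/-- `G` has the interval property with respect to its labeling: for every edge `{i,j}`
with `i < j`, every pair `{k,l}` with `i ≤ k < l ≤ j` is an edge of `G`. -/
def HasIntervalProperty {n : ℕ} (G : SimpleGraph (Fin n)) : Prop :=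
  ∀ i j k l : Fin n, G.Adj i j → i < j → i ≤ k → k < l → l ≤ j → G.Adj k l

/-- The bipartite graph `in_lex(G)` on `{x_1,…,x_n} ∪ {y_1,…,y_n}` (here `Sum.inl i = x_i`,
`Sum.inr j = y_j`) whose edges are the pairs `{x_i, y_j}` with `i < j` and `{i,j} ∈ E(G)`. -/
def inLex {n : ℕ} (G : SimpleGraph (Fin n)) : SimpleGraph (Fin n ⊕ Fin n) :=
  SimpleGraph.fromRel (fun u v =>
    ∃ i j : Fin n, i < j ∧ G.Adj i j ∧ u = Sum.inl i ∧ v = Sum.inr j)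

/-- `M` is an induced matching of `H`: a set of edges of `H`, pairwise vertex-disjoint,
such that no edge of `H` joins two vertices lying in distinct edges of `M`. -/
def IsInducedMatching {V : Type*} (H : SimpleGraph V) (M : Set (Sym2 V)) : Prop :=
  M ⊆ H.edgeSet ∧
  (∀ e ∈ M, ∀ f ∈ M, e ≠ f → ∀ v, v ∈ e → v ∉ f) ∧
  (∀ e ∈ M, ∀ f ∈ M, e ≠ f → ∀ u ∈ e, ∀ v ∈ f, ¬ H.Adj u v)

/-- An indexed family of `m` pairwise distinct edges forming an induced matching of `H`. -/
def IsInducedMatchingFamily {V : Type*} (H : SimpleGraph V) {m : ℕ} (f : Fin m → Sym2 V) : Prop :=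
  Function.Injective f ∧ IsInducedMatching H (Set.range f)

/-- `p` is an induced path of length `l` in `G`: `l+1` distinct vertices such that the edges
of `G` among them are exactly the consecutive pairs. -/
def IsInducedPath {V : Type*} (G : SimpleGraph V) (l : ℕ) (p : Fin (l + 1) → V) : Prop :=
  Function.Injective p ∧
  ∀ a b : Fin (l + 1), G.Adj (p a) (p b) ↔ ((a : ℕ) + 1 = b ∨ (b : ℕ) + 1 = a)

/-- `c` is an induced cycle of length `k` in `H`: `k` distinct vertices such that the edges
of `H` among them are exactly the consecutive pairs (cyclically). -/
def IsInducedCycle {V : Type*} (H : SimpleGraph V) (k : ℕ) (c : Fin k → V) : Prop :=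
  3 ≤ k ∧ Function.Injective c ∧
  ∀ a b : Fin k, H.Adj (c a) (c b) ↔ (((a : ℕ) + 1) % k = b ∨ ((b : ℕ) + 1) % k = a)

/-- Condition (∗) for an induced matching `{x_{i t}, y_{j t}}` of `in_lex(G)`: for every
index `a` and vertex `t < i a` with `{t, j a} ∈ E(G)`, replacing `x_{i a}` by `x_t`
does not yield an induced matching of `in_lex(G)`. -/
def CondStar {n m : ℕ} (G : SimpleGraph (Fin n)) (i j : Fin m → Fin n) : Prop :=
  ∀ a : Fin m, ∀ t : Fin n, t < i a → G.Adj t (j a) →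
    ¬ IsInducedMatchingFamily (inLex G)
        (fun u => if u = a then s(Sum.inl t, Sum.inr (j u))
                  else s(Sum.inl (i u), Sum.inr (j u)))

/-!
The interval property forces the edges of an induced matching of `in_lex(G)`, ordered by their
left endpoints, to span disjoint intervals: `j_u ≤ i_{u'}` whenever `u < u'`. If `{i_a, i_{a+1}}`
were not an edge, then `j_a < i_{a+1}`, so `p = i_{a+1} - 1` lies strictly between the two
intervals, and `{p, i_{a+1}}` is an edge since `G` is connected. If `{p, j_{a+1}}` is an edge,
replacing `x_{i_{a+1}}` by `x_p` keeps the matching induced, contradicting (∗); otherwise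
`{x_p, y_{i_{a+1}}}` can be added to the matching, contradicting its maximality.
-/

open Sum

section Bipartite

variable {α β : Type*} {H : SimpleGraph (α ⊕ β)} (hl : ∀ a a', ¬H.Adj (inl a) (inl a'))
  (hr : ∀ b b', ¬H.Adj (inr b) (inr b')) {m : ℕ} {I : Fin m → α} {J : Fin m → β}
include hl hr

theorem isInducedMatchingFamily_iff_adj :
    IsInducedMatchingFamily H (fun u => s(inl (I u), inr (J u))) ↔
      ∀ u u', H.Adj (inl (I u)) (inr (J u')) ↔ u = u' := by
  constructor
  · rintro ⟨hinj, hsub, -, hind⟩ u u'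
    refine ⟨fun h => by_contra fun hne => ?_, ?_⟩
    · exact hind _ ⟨u, rfl⟩ _ ⟨u', rfl⟩ (hinj.ne hne) _ (Sym2.mem_mk_left _ _) _
        (Sym2.mem_mk_right _ _) h
    · rintro rfl
      exact hsub ⟨u, rfl⟩
  · intro hadj
    have hI : ∀ u u', I u = I u' → u = u' := fun u u' h =>
      (hadj u u').1 (h ▸ (hadj u' u').2 rfl)
    have hJ : ∀ u u', J u = J u' → u = u' := fun u u' h =>
      (hadj u u').1 (h ▸ (hadj u u).2 rfl)
    refine ⟨fun u u' h => ?_, ?_, ?_, ?_⟩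
    · simp only [Sym2.eq_iff, inl.injEq, inr.injEq, reduceCtorEq, false_and, or_false] at h
      exact hI u u' h.1
    · rintro _ ⟨u, rfl⟩
      exact (hadj u u).2 rfl
    · rintro _ ⟨u, rfl⟩ _ ⟨u', rfl⟩ hne v hv hv'
      have hne : u ≠ u' := by rintro rfl; exact hne rfl
      simp only [Sym2.mem_iff] at hv
      rcases hv with rfl | rfl <;>
        simp only [Sym2.mem_iff, inl.injEq, inr.injEq, reduceCtorEq, or_false, false_or] at hv'
      exacts [hne (hI _ _ hv'), hne (hJ _ _ hv')]
    · rintro _ ⟨u, rfl⟩ _ ⟨u', rfl⟩ hne v hv w hw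
      have hne : u ≠ u' := by rintro rfl; exact hne rfl
      simp only [Sym2.mem_iff] at hv hw
      rcases hv with rfl | rfl <;> rcases hw with rfl | rfl
      · exact hl _ _
      · exact fun h => hne ((hadj u u').1 h)
      · exact fun h => hne ((hadj u' u).1 h.symm).symm
      · exact hr _ _

theorem IsInducedMatchingFamily.snoc
    (hM : IsInducedMatchingFamily H (fun u => s(inl (I u), inr (J u)))) {a : α} {b : β}
    (hab : H.Adj (inl a) (inr b)) (hb : ∀ u, ¬H.Adj (inl (I u)) (inr b))
    (ha : ∀ u, ¬H.Adj (inl a) (inr (J u))) :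
    IsInducedMatchingFamily H (fun u =>
      s(inl (Fin.snoc (α := fun _ => α) I a u), inr (Fin.snoc (α := fun _ => β) J b u))) := by
  rw [isInducedMatchingFamily_iff_adj hl hr] at hM ⊢
  intro u u'
  induction u using Fin.lastCases <;> induction u' using Fin.lastCases <;>
    simp [hM, hab, hb, ha, Fin.castSucc_ne_last, (Fin.castSucc_ne_last _).symm]

theorem IsInducedMatchingFamily.update
    (hM : IsInducedMatchingFamily H (fun u => s(inl (I u), inr (J u)))) {k : Fin m} {a : α}
    (hak : H.Adj (inl a) (inr (J k))) (ha : ∀ u ≠ k, ¬H.Adj (inl a) (inr (J u))) :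
    IsInducedMatchingFamily H (fun u => s(inl (Function.update I k a u), inr (J u))) := by
  rw [isInducedMatchingFamily_iff_adj hl hr] at hM ⊢
  intro u u'
  by_cases hu : u = k
  · subst hu
    by_cases hu' : u' = u
    · simp [hu', hak]
    · simp [ha u' hu', Ne.symm hu']
  · simp [Function.update_of_ne hu, hM]

end Bipartite

section InLex

variable {n : ℕ} {G : SimpleGraph (Fin n)}

theorem inLex_adj_inl_inr {p q : Fin n} :
    (inLex G).Adj (inl p) (inr q) ↔ p < q ∧ G.Adj p q := by
  simp [inLex]

theorem inLex_not_adj_inl_inl (p q : Fin n) : ¬(inLex G).Adj (inl p) (inl q) := by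
  simp [inLex]

theorem inLex_not_adj_inr_inr (p q : Fin n) : ¬(inLex G).Adj (inr p) (inr q) := by
  simp [inLex]

theorem lt_of_isInducedMatchingFamily_inLex {m : ℕ} {I J : Fin m → Fin n}
    (hM : IsInducedMatchingFamily (inLex G) (fun u => s(inl (I u), inr (J u)))) (u : Fin m) :
    I u < J u :=
  (inLex_adj_inl_inr.1 (hM.2.1 ⟨u, rfl⟩)).1

theorem inLex_isInducedMatchingFamily_iff {m : ℕ} {I J : Fin m → Fin n} :
    IsInducedMatchingFamily (inLex G) (fun u => s(inl (I u), inr (J u))) ↔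
      ∀ u u', (inLex G).Adj (inl (I u)) (inr (J u')) ↔ u = u' :=
  isInducedMatchingFamily_iff_adj inLex_not_adj_inl_inl inLex_not_adj_inr_inr

theorem CondStar.not_isInducedMatchingFamily_update {m : ℕ} {I J : Fin m → Fin n}
    (h : CondStar G I J) {k : Fin m} {p : Fin n} (hpk : p < I k) (hp : G.Adj p (J k)) :
    ¬IsInducedMatchingFamily (inLex G) (fun u => s(inl (Function.update I k p u), inr (J u))) := by
  convert h k p hpk hp using 3 with u
  split_ifs with hu <;> simp [hu]

namespace HasIntervalProperty

variable (hG : HasIntervalProperty G)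
include hG

theorem inLex_adj_of_le {p q k l : Fin n} (h : (inLex G).Adj (inl p) (inr q)) (hpk : p ≤ k)
    (hkl : k < l) (hlq : l ≤ q) : (inLex G).Adj (inl k) (inr l) := by
  rw [inLex_adj_inl_inr] at h ⊢
  exact ⟨hkl, hG p q k l h.2 h.1 hpk hkl hlq⟩

theorem adj_of_val_add_one_eq (hconn : G.Connected) {x y : Fin n} (hxy : (x : ℕ) + 1 = y) :
    G.Adj x y := by
  obtain ⟨w⟩ := hconn.preconnected x y
  obtain ⟨d, -, hd₁, hd₂⟩ := w.exists_boundary_dart (Set.Iic x) (Set.mem_Iic.2 le_rfl)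
    (by rw [Set.mem_Iic, Fin.le_def]; omega)
  rw [Set.mem_Iic] at hd₁ hd₂
  rw [not_le, Fin.lt_def] at hd₂
  exact hG _ _ x y d.adj (hd₁.trans_lt (Fin.lt_def.2 hd₂)) hd₁
    (Fin.lt_def.2 (by omega)) (Fin.le_def.2 (by omega))

variable {m : ℕ} {I J : Fin m → Fin n} (hI : StrictMono I)
  (hM : IsInducedMatchingFamily (inLex G) (fun u => s(inl (I u), inr (J u))))
include hI hM

theorem right_le_left_of_lt {u u' : Fin m} (h : u < u') : J u ≤ I u' := by
  rw [inLex_isInducedMatchingFamily_iff] at hM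
  by_contra! hlt
  exact h.ne' ((hM u' u).1 (hG.inLex_adj_of_le ((hM u u).2 rfl) (hI h).le hlt le_rfl))

theorem strictMono_right : StrictMono J := fun _ u h =>
  (hG.right_le_left_of_lt hI hM h).trans_lt (lt_of_isInducedMatchingFamily_inLex hM u)

theorem not_inLex_adj_of_le {k : Fin m} {p : Fin n} (hpk : p ≤ I k) (hp : ∀ u < k, J u ≤ p)
    {u : Fin m} (hu : u ≠ k) : ¬(inLex G).Adj (inl p) (inr (J u)) := by
  intro h
  rcases hu.lt_or_gt with hu | hu
  · exact (hp u hu).not_gt (inLex_adj_inl_inr.1 h).1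
  · have hku : I k < J u := (hI hu).trans (lt_of_isInducedMatchingFamily_inLex hM u)
    exact hu.ne ((inLex_isInducedMatchingFamily_iff.1 hM k u).1
      (hG.inLex_adj_of_le h hpk hku le_rfl))

theorem isInducedMatchingFamily_update {k : Fin m} {p : Fin n} (hpk : p < I k)
    (hp : ∀ u < k, J u ≤ p) (hpJ : G.Adj p (J k)) :
    IsInducedMatchingFamily (inLex G) (fun u => s(inl (Function.update I k p u), inr (J u))) :=
  hM.update inLex_not_adj_inl_inl inLex_not_adj_inr_inr
    (inLex_adj_inl_inr.2 ⟨hpk.trans (lt_of_isInducedMatchingFamily_inLex hM k), hpJ⟩)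
    (fun _ => hG.not_inLex_adj_of_le hI hM hpk.le hp)

theorem isInducedMatchingFamily_snoc {k : Fin m} {p : Fin n} (hpk : p < I k)
    (hp : ∀ u < k, J u ≤ p) (hpI : G.Adj p (I k)) (hpJ : ¬G.Adj p (J k))
    (hk : ∀ u < k, ¬G.Adj (I u) (I k)) :
    IsInducedMatchingFamily (inLex G) (fun u => s(inl (Fin.snoc (α := fun _ => Fin n) I p u),
      inr (Fin.snoc (α := fun _ => Fin n) J (I k) u))) := by
  refine hM.snoc inLex_not_adj_inl_inl inLex_not_adj_inr_inr (inLex_adj_inl_inr.2 ⟨hpk, hpI⟩)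
    (fun u h => ?_) (fun u => ?_)
  · rcases lt_or_ge u k with hu | hu
    · exact hk u hu (inLex_adj_inl_inr.1 h).2
    · exact (hI.monotone hu).not_gt (inLex_adj_inl_inr.1 h).1
  · by_cases hu : u = k
    · exact hu ▸ fun h => hpJ (inLex_adj_inl_inr.1 h).2
    · exact hG.not_inLex_adj_of_le hI hM hpk.le hp hu

end HasIntervalProperty

end InLex

/-- If `G` is connected with the interval property and `{x_{i_1}, y_{j_1}}, …,
{x_{i_m}, y_{j_m}}` is an induced matching of `in_lex(G)` with `i_1 < ⋯ < i_m` satisfying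
(∗) and `m = indmatch(in_lex(G))`, then `{i_a, i_{a+1}} ∈ E(G)` for all `a`. -/
theorem stmt_12 {n m : ℕ} (G : SimpleGraph (Fin n)) (hconn : G.Connected)
    (hG : HasIntervalProperty G)
    (i j : Fin m → Fin n) (hmono : StrictMono i)
    (hM : IsInducedMatchingFamily (inLex G)
      (fun t => s(Sum.inl (i t), Sum.inr (j t))))
    (hstar : CondStar G i j)
    (hm : IsGreatest {k : ℕ | ∃ M : Set (Sym2 (Fin n ⊕ Fin n)),
            IsInducedMatching (inLex G) M ∧ M.ncard = k} m) :
    ∀ a b : Fin m, (a : ℕ) + 1 = b → G.Adj (i a) (i b) := by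
  intro a b hab
  by_contra hadj
  have hab' : a < b := Fin.lt_def.2 (by omega)
  have hle : ∀ u < b, u ≤ a := fun u hu => Fin.le_def.2 (by have := Fin.lt_def.1 hu; omega)
  have hja : j a < i b := (hG.right_le_left_of_lt hmono hM hab').lt_of_ne fun h =>
    hadj (h ▸ (inLex_adj_inl_inr.1 (hM.2.1 ⟨a, rfl⟩)).2)
  obtain ⟨p, hp⟩ : ∃ p : Fin n, (p : ℕ) + 1 = i b :=
    ⟨⟨i b - 1, by omega⟩, by have := Fin.lt_def.1 hja; simp only; omega⟩
  have hpb : p < i b := Fin.lt_def.2 (by omega)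
  have hjp : ∀ u < b, j u ≤ p := fun u hu =>
    ((hG.strictMono_right hmono hM).monotone (hle u hu)).trans
      (Fin.le_def.2 (by have := Fin.lt_def.1 hja; omega))
  by_cases hpj : G.Adj p (j b)
  · exact hstar.not_isInducedMatchingFamily_update hpb hpj
      (hG.isInducedMatchingFamily_update hmono hM hpb hjp hpj)
  · have hM₁ := hG.isInducedMatchingFamily_snoc hmono hM hpb hjp
      (hG.adj_of_val_add_one_eq hconn hp) hpj fun u hu h =>
        hadj (hG _ _ _ _ h (hmono hu) (hmono.monotone (hle u hu)) (hmono hab') le_rfl)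
    have := hm.2 ⟨_, hM₁.2, Set.ncard_range_of_injective hM₁.1⟩
    simp at this
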